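/- Let A be a q×n complex matrix, W a nonzero n×q complex matrix, and m a positive integer. Then A^{Ⓦ_m,W,†} = (WA)^{Ⓦ_m}·W·A·A^†, where (WA)^{Ⓦ_m} is the m-weak group inverse of the square matrix WA. -/

import Mathlib

/-!
Since `(WA)^⊕` is an outer inverse of `WA` with the range of `(WA)^k`, `k` the index, the
projector `WA (WA)^⊕` has range `R((WA)^(k+1)) = R((WA)^k)` and so fixes `(WA)^⊕`:
`WA ((WA)^⊕)^2 = (WA)^⊕`, i.e. `W A^{⊕,W} = (WA)^⊕`. Moving the leading `W` through
`(A^{⊕,W} W)^m A^{⊕,W}` then turns `W A^{Ⓦ_m,W}` into `((WA)^⊕)^(m+1) (WA)^m`.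
-/

open Matrix

/-- Index of a square matrix: least `d` with `rank (B^d) = rank (B^(d+1))`. -/
noncomputable def matInd {ι : Type*} [Fintype ι] [DecidableEq ι] (B : Matrix ι ι ℂ) : ℕ :=
  sInf {d : ℕ | (B ^ d).rank = (B ^ (d + 1)).rank}

/-- `X` is the Moore-Penrose inverse of `A` (four Penrose equations). -/
noncomputable def IsMP {ι κ : Type*} [Fintype ι] [Fintype κ] (A : Matrix ι κ ℂ) (X : Matrix κ ι ℂ) : Prop :=
  A * X * A = A ∧ X * A * X = X ∧ (A * X)ᴴ = A * X ∧ (X * A)ᴴ = X * A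

/-- Column space (range) of a matrix. -/
noncomputable def mrange {ι κ : Type*} [Fintype κ] (M : Matrix ι κ ℂ) : Submodule ℂ (ι → ℂ) :=
  LinearMap.range M.mulVecLin

/-- Null space of a matrix. -/
noncomputable def mker {ι κ : Type*} [Fintype κ] (M : Matrix ι κ ℂ) : Submodule ℂ (κ → ℂ) :=
  LinearMap.ker M.mulVecLin

/-- `X` is the core-EP inverse of `B`. -/
noncomputable def IsCoreEP {ι : Type*} [Fintype ι] [DecidableEq ι] (B X : Matrix ι ι ℂ) : Prop :=
  X * B * X = X ∧ mrange X = mrange (B ^ matInd B) ∧ mrange Xᴴ = mrange (B ^ matInd B)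

/-- `X` is the Drazin inverse of `B`. -/
noncomputable def IsDrazin {ι : Type*} [Fintype ι] [DecidableEq ι] (B X : Matrix ι ι ℂ) : Prop :=
  X * B * X = X ∧ B * X = X * B ∧ B ^ (matInd B + 1) * X = B ^ matInd B

/-- `X` is the group inverse of `B`. -/
noncomputable def IsGroupInv {ι : Type*} [Fintype ι] (B X : Matrix ι ι ℂ) : Prop :=
  B * X * B = B ∧ X * B * X = X ∧ B * X = X * B

/-- Frobenius norm of a matrix. -/
noncomputable def frobNorm {ι κ : Type*} [Fintype ι] [Fintype κ] (M : Matrix ι κ ℂ) : ℝ :=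
  Real.sqrt (∑ i, ∑ j, ‖M i j‖ ^ 2)

section Range

variable {ι κ : Type*} [Fintype ι] [Fintype κ]

lemma mrange_mul (M : Matrix ι ι ℂ) (N : Matrix ι κ ℂ) :
    mrange (M * N) = (mrange N).map M.mulVecLin := by
  simp only [mrange, mulVecLin_mul, LinearMap.range_comp]

lemma mul_eq_of_isIdempotentElem_of_mrange_le [DecidableEq κ] {P : Matrix ι ι ℂ}
    {M : Matrix ι κ ℂ} (hP : IsIdempotentElem P) (h : mrange M ≤ mrange P) : P * M = M := by
  ext i j
  obtain ⟨y, hy⟩ := h ⟨Pi.single j 1, rfl⟩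
  change P *ᵥ y = M *ᵥ Pi.single j 1 at hy
  have hfix : P *ᵥ (M *ᵥ Pi.single j 1) = M *ᵥ Pi.single j 1 := by
    rw [← hy, mulVec_mulVec, hP.eq]
  rw [mulVec_mulVec] at hfix
  simpa only [mulVec_single_one, col_apply] using congrFun hfix i

end Range

section Index

variable {ι : Type*} [Fintype ι] [DecidableEq ι]

lemma rank_pow_matInd_succ (B : Matrix ι ι ℂ) :
    (B ^ (matInd B + 1)).rank = (B ^ matInd B).rank := by
  refine (Nat.sInf_mem (s := {d : ℕ | (B ^ d).rank = (B ^ (d + 1)).rank}) ?_).symm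
  by_contra hempty
  have hlt : ∀ d : ℕ, (B ^ (d + 1)).rank < (B ^ d).rank := fun d =>
    lt_of_le_of_ne (pow_succ B d ▸ rank_mul_le_left _ _)
      (fun he => hempty ⟨d, he.symm⟩)
  have hbound : ∀ d : ℕ, (B ^ d).rank + d ≤ (B ^ 0).rank := by
    intro d
    induction d with
    | zero => simp
    | succ k ih => have := hlt k; omega
  have := hbound ((B ^ 0).rank + 1)
  omega

lemma mrange_pow_matInd_succ (B : Matrix ι ι ℂ) :
    mrange (B ^ (matInd B + 1)) = mrange (B ^ matInd B) := by
  refine Submodule.eq_of_le_of_finrank_le ?_ (rank_pow_matInd_succ B).ge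
  rw [pow_succ, mrange_mul]
  exact LinearMap.map_le_range

lemma IsCoreEP.mul_mul_self {B X : Matrix ι ι ℂ} (h : IsCoreEP B X) : B * (X * X) = X := by
  obtain ⟨hXBX, hrange, -⟩ := h
  have hidem : IsIdempotentElem (B * X) := by
    rw [IsIdempotentElem, mul_assoc, ← mul_assoc X, hXBX]
  have hrangeBX : mrange (B * X) = mrange X := by
    rw [mrange_mul, hrange, ← mrange_mul, ← pow_succ', mrange_pow_matInd_succ]
  rw [← mul_assoc]
  exact mul_eq_of_isIdempotentElem_of_mrange_le hidem hrangeBX.ge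

end Index

section Weighted

variable {R ι κ ν : Type*} [Semiring R] [Fintype ι] [Fintype κ] [DecidableEq ι]
  [DecidableEq κ]

lemma mul_mul_pow_eq_pow_mul_mul (M : Matrix ι κ R) (N : Matrix κ ι R) (k : ℕ) :
    N * (M * N) ^ k = (N * M) ^ k * N := by
  induction k with
  | zero => simp
  | succ k ih =>
    rw [pow_succ, ← Matrix.mul_assoc, ih, Matrix.mul_assoc, ← Matrix.mul_assoc N M N,
      ← Matrix.mul_assoc, ← pow_succ]

lemma mul_pow_mul_mul_mul [Fintype ν] {W : Matrix κ ι R} {Z : Matrix ι κ R}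
    {Y : Matrix κ κ R} (hWZ : W * Z = Y) (m : ℕ) (C : Matrix κ ν R) :
    W * ((Z * W) ^ m * Z * C) = Y ^ (m + 1) * C := by
  rw [← Matrix.mul_assoc, ← Matrix.mul_assoc, mul_mul_pow_eq_pow_mul_mul, hWZ,
    Matrix.mul_assoc _ W Z, hWZ, ← pow_succ]

end Weighted

theorem stmt8_general {q n : ℕ} (A : Matrix (Fin q) (Fin n) ℂ) (W : Matrix (Fin n) (Fin q) ℂ)
    (m : ℕ)
    (Adag : Matrix (Fin n) (Fin q) ℂ)
    (WAcep : Matrix (Fin n) (Fin n) ℂ) (hWAcep : IsCoreEP (W * A) WAcep)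
    (AepW AWGm : Matrix (Fin q) (Fin n) ℂ) (AWGMP : Matrix (Fin n) (Fin q) ℂ)
    (hAepW : AepW = A * (WAcep * WAcep))
    (hAWGm : AWGm = (AepW * W) ^ m * AepW * (W * A) ^ m)
    (hAWGMP : AWGMP = W * AWGm * W * A * Adag) :
    AWGMP = (WAcep ^ (m + 1) * (W * A) ^ m) * W * A * Adag := by
  have hWAepW : W * AepW = WAcep := by
    rw [hAepW, ← Matrix.mul_assoc, hWAcep.mul_mul_self]
  rw [hAWGMP, hAWGm, mul_pow_mul_mul_mul hWAepW]

theorem stmt8 {q n : ℕ} (A : Matrix (Fin q) (Fin n) ℂ) (W : Matrix (Fin n) (Fin q) ℂ)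
    (hW : W ≠ 0) (m : ℕ) (hm : 0 < m)
    (Adag : Matrix (Fin n) (Fin q) ℂ) (hAdag : IsMP A Adag)
    (WAcep : Matrix (Fin n) (Fin n) ℂ) (hWAcep : IsCoreEP (W * A) WAcep)
    (AepW AWGm : Matrix (Fin q) (Fin n) ℂ) (AWGMP : Matrix (Fin n) (Fin q) ℂ)
    (hAepW : AepW = A * (WAcep * WAcep))
    (hAWGm : AWGm = (AepW * W) ^ m * AepW * (W * A) ^ m)
    (hAWGMP : AWGMP = W * AWGm * W * A * Adag) :
    AWGMP = (WAcep ^ (m + 1) * (W * A) ^ m) * W * A * Adag :=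
  stmt8_general A W m Adag WAcep hWAcep AepW AWGm AWGMP hAepW hAWGm hAWGMP
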